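/- Let {f_i}_{i∈I} be a Parseval frame for a Hilbert space H. Then for every subset J ⊆ I and every f ∈ H: ∑_{i∈J} |⟨f, f_i⟩|² + ‖∑_{i∈J^c} ⟨f, f_i⟩ f_i‖² = ∑_{i∈J^c} |⟨f, f_i⟩|² + ‖∑_{i∈J} ⟨f, f_i⟩ f_i‖², where J^c = I \ J. -/

import Mathlib

/-!
Parseval's identity gives the Bessel bound on finite sums, hence `‖∑ c i • f i‖² ≤ ∑ ‖c i‖²`, so
the synthesis sums converge for square-summable coefficients and `x = ∑ ⟪f i, x⟫ • f i`.
Splitting `x = T + T'` into the parts over `J` and `Jᶜ`, we get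
`Re ⟪x, T⟫ = ∑_{i ∈ J} ‖⟪f i, x⟫‖²`, and `Re ⟪T + T', T⟫ + ‖T'‖²` is symmetric in `T, T'`.
-/

open scoped InnerProductSpace ComplexConjugate

section

variable {𝕜 H ι : Type*} [RCLike 𝕜] [NormedAddCommGroup H] [InnerProductSpace 𝕜 H]

theorem re_inner_add_add_norm_sq_comm (u v : H) :
    RCLike.re ⟪u + v, u⟫_𝕜 + ‖v‖ ^ 2 = RCLike.re ⟪u + v, v⟫_𝕜 + ‖u‖ ^ 2 := by
  rw [inner_add_left, inner_add_left, map_add, map_add, inner_self_eq_norm_sq,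
    inner_self_eq_norm_sq, inner_re_symm v u]
  ring

variable (𝕜) in
def IsParsevalFrame (f : ι → H) : Prop :=
  ∀ x : H, HasSum (fun i => ‖⟪f i, x⟫_𝕜‖ ^ 2) (‖x‖ ^ 2)

namespace IsParsevalFrame

variable {f : ι → H} (hf : IsParsevalFrame 𝕜 f)
include hf

theorem sum_norm_inner_sq_le (x : H) (s : Finset ι) :
    ∑ i ∈ s, ‖⟪f i, x⟫_𝕜‖ ^ 2 ≤ ‖x‖ ^ 2 :=
  (hf x).tsum_eq ▸ (hf x).summable.sum_le_tsum s fun _ _ => by positivity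

theorem norm_sum_smul_sq_le (c : ι → 𝕜) (s : Finset ι) :
    ‖∑ i ∈ s, c i • f i‖ ^ 2 ≤ ∑ i ∈ s, ‖c i‖ ^ 2 := by
  set y := ∑ i ∈ s, c i • f i
  set A := ∑ i ∈ s, ‖c i‖ ^ 2
  have h_inner : ‖y‖ ^ 2 ≤ ∑ i ∈ s, ‖c i‖ * ‖⟪f i, y⟫_𝕜‖ :=
    calc ‖y‖ ^ 2 = ‖⟪y, y⟫_𝕜‖ := by
          rw [inner_self_eq_norm_sq_to_K, norm_pow, RCLike.norm_ofReal, abs_norm]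
      _ = ‖∑ i ∈ s, conj (c i) * ⟪f i, y⟫_𝕜‖ := by simp only [y, sum_inner, inner_smul_left]
      _ ≤ ∑ i ∈ s, ‖c i‖ * ‖⟪f i, y⟫_𝕜‖ := by
        refine (norm_sum_le _ _).trans_eq (Finset.sum_congr rfl fun i _ => ?_)
        rw [norm_mul, RCLike.norm_conj]
  have key : (‖y‖ ^ 2) ^ 2 ≤ A * ‖y‖ ^ 2 :=
    calc (‖y‖ ^ 2) ^ 2 ≤ (∑ i ∈ s, ‖c i‖ * ‖⟪f i, y⟫_𝕜‖) ^ 2 := by gcongr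
      _ ≤ A * ∑ i ∈ s, ‖⟪f i, y⟫_𝕜‖ ^ 2 := Finset.sum_mul_sq_le_sq_mul_sq s _ _
      _ ≤ A * ‖y‖ ^ 2 := by gcongr; exact hf.sum_norm_inner_sq_le y s
  nlinarith [sq_nonneg ‖y‖, Finset.sum_nonneg fun i (_ : i ∈ s) => sq_nonneg ‖c i‖]

variable [CompleteSpace H]

theorem summable_smul {c : ι → 𝕜} (hc : Summable fun i => ‖c i‖ ^ 2) :
    Summable fun i => c i • f i := by
  refine summable_iff_vanishing_norm.2 fun ε hε => ?_
  obtain ⟨s, hs⟩ := summable_iff_vanishing_norm.1 hc (ε ^ 2) (by positivity)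
  refine ⟨s, fun t ht => ?_⟩
  have h_tail : ∑ i ∈ t, ‖c i‖ ^ 2 < ε ^ 2 := by
    simpa only [Real.norm_of_nonneg (Finset.sum_nonneg fun i _ => sq_nonneg ‖c i‖)] using hs t ht
  exact lt_of_pow_lt_pow_left₀ 2 hε.le ((hf.norm_sum_smul_sq_le c t).trans_lt h_tail)

theorem summable_inner_smul (x : H) : Summable fun i => ⟪f i, x⟫_𝕜 • f i :=
  hf.summable_smul (hf x).summable

theorem inner_tsum_subtype_inner_smul (x : H) (J : Set ι) :
    ⟪x, ∑' i : J, ⟪f i, x⟫_𝕜 • f i⟫_𝕜 = ((∑' i : J, ‖⟪f i, x⟫_𝕜‖ ^ 2 : ℝ) : 𝕜) := by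
  have h_map := ((hf.summable_inner_smul x).subtype J).hasSum.mapL (innerSL 𝕜 x)
  have h_term (i : ι) : ⟪x, ⟪f i, x⟫_𝕜 • f i⟫_𝕜 = ((‖⟪f i, x⟫_𝕜‖ ^ 2 : ℝ) : 𝕜) := by
    rw [inner_smul_right, ← inner_conj_symm x, RCLike.mul_conj]
    push_cast; rfl
  simp only [Function.comp_def, innerSL_apply_apply, h_term] at h_map
  exact h_map.unique ((RCLike.hasSum_ofReal 𝕜).2 ((hf x).summable.subtype J).hasSum)

theorem tsum_inner_smul (x : H) : ∑' i, ⟪f i, x⟫_𝕜 • f i = x := by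
  set T := ∑' i, ⟪f i, x⟫_𝕜 • f i
  have h_inner : RCLike.re ⟪x, T⟫_𝕜 = ‖x‖ ^ 2 := by
    have := hf.inner_tsum_subtype_inner_smul x Set.univ
    rw [tsum_univ (f := fun i => ⟪f i, x⟫_𝕜 • f i), tsum_univ (f := fun i => ‖⟪f i, x⟫_𝕜‖ ^ 2),
      (hf x).tsum_eq] at this
    rw [this, RCLike.ofReal_re]
  have h_norm : ‖T‖ ^ 2 ≤ ‖x‖ ^ 2 :=
    le_of_tendsto (((hf.summable_inner_smul x).hasSum.norm).pow 2)
      (Filter.Eventually.of_forall fun s =>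
        (hf.norm_sum_smul_sq_le _ s).trans (hf.sum_norm_inner_sq_le x s))
  have h_dist : ‖x - T‖ ^ 2 ≤ 0 := by
    rw [@norm_sub_sq 𝕜, h_inner]
    linarith
  rw [eq_comm, ← sub_eq_zero, ← norm_eq_zero]
  exact pow_eq_zero_iff two_ne_zero |>.1 (le_antisymm h_dist (sq_nonneg _))

end IsParsevalFrame

end

/-- For a Parseval frame `{f_i}`, any `J ⊆ I` and any `x`:
`∑_{i∈J} |⟨x,f_i⟩|² + ‖∑_{i∈J^c} ⟨x,f_i⟩ f_i‖² = ∑_{i∈J^c} |⟨x,f_i⟩|² + ‖∑_{i∈J} ⟨x,f_i⟩ f_i‖²`. -/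
theorem stmt_17 {H : Type*} [NormedAddCommGroup H] [InnerProductSpace ℂ H] [CompleteSpace H]
    {ι : Type*} (f : ι → H)
    (hP : ∀ x : H, HasSum (fun i => ‖⟪f i, x⟫_ℂ‖ ^ 2) (‖x‖ ^ 2))
    (J : Set ι) (x : H) :
    (∑' i : J, ‖⟪f i, x⟫_ℂ‖ ^ 2) + ‖∑' i : ↥Jᶜ, ⟪f i, x⟫_ℂ • (f i : H)‖ ^ 2 =
    (∑' i : ↥Jᶜ, ‖⟪f i, x⟫_ℂ‖ ^ 2) + ‖∑' i : J, ⟪f i, x⟫_ℂ • (f i : H)‖ ^ 2 := by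
  have hf : IsParsevalFrame ℂ f := hP
  set T := ∑' i : J, ⟪f i, x⟫_ℂ • f i
  set T' := ∑' i : ↥Jᶜ, ⟪f i, x⟫_ℂ • f i
  have h_split : T + T' = x := by
    rw [(hf.summable_inner_smul x).tsum_subtype_add_tsum_subtype_compl J, hf.tsum_inner_smul x]
  have h_sym := re_inner_add_add_norm_sq_comm (𝕜 := ℂ) T T'
  rw [h_split] at h_sym
  rw [← RCLike.ofReal_re (K := ℂ) (∑' i : J, _), ← RCLike.ofReal_re (K := ℂ) (∑' i : ↥Jᶜ, _),
    ← hf.inner_tsum_subtype_inner_smul x J, ← hf.inner_tsum_subtype_inner_smul x Jᶜ]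
  exact h_sym
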